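/- Assume strict feasibility, i.e., Pmax·∑_k b_k > η. Suppose λ̄ > 0 and ᾱ > 0 are such that, with S = {k : λ̄ ≥ ι_k(ᾱ)} and D_S = η − Pmax·∑_{k∈S} b_k, the following hold: S ≠ ∅, D_S > 0, ᾱ = (1/Pmax)·( (∑_{k∈S} h_k) / ((σ² + λ̄·D_S)/Pmax + ∑_{k∈S} h_k²) )², λ̄ < ι_k(ᾱ) for every k ∉ S, and ∑_{k∉S} b_k·h_k²/(h_k² − λ̄·b_k)² = D_S·ᾱ. Then the point (x̄, ᾱ) defined by x̄_k = h_k²/(h_k² − λ̄·b_k)² for k ∉ S and x̄_k = ᾱ·Pmax for k ∈ S is a global minimizer of (P2). -/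
import Mathlib


open Finset
open scoped Classical

/-- Objective of problem (P2). -/
noncomputable def objP2 (K : ℕ) (h : Fin K → ℝ) (σ2 : ℝ)
    (x : Fin K → ℝ) (α : ℝ) : ℝ :=
  ∑ k, (h k) ^ 2 * x k - 2 * ∑ k, h k * Real.sqrt (x k) + α * σ2

/-- Feasibility for problem (P2). -/
def FeasP2 (K : ℕ) (b : Fin K → ℝ) (η Pmax : ℝ)
    (x : Fin K → ℝ) (α : ℝ) : Prop :=
  (∑ k, b k * x k) ≥ η * α ∧ (∀ k, 0 ≤ x k ∧ x k ≤ Pmax * α) ∧ 0 < α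

/-- The threshold function `ι_k(α)`. -/
noncomputable def iota (K : ℕ) (h b : Fin K → ℝ) (Pmax : ℝ)
    (k : Fin K) (α : ℝ) : ℝ :=
  (h k) ^ 2 / b k * (1 - 1 / (h k * Real.sqrt (α * Pmax)))

theorem stmt_13 (K : ℕ) (hK : 1 ≤ K) (h b : Fin K → ℝ)
    (hh : ∀ k, 0 < h k) (hb : ∀ k, 0 < b k)
    (σ2 η Pmax : ℝ) (hσ : 0 < σ2) (hη : 0 < η) (hP : 0 < Pmax)
    (hstrict : Pmax * ∑ k, b k > η)
    (lam α : ℝ) (hlam : 0 < lam) (hα : 0 < α)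
    (S : Finset (Fin K))
    (hSdef : S = Finset.univ.filter (fun k => iota K h b Pmax k α ≤ lam))
    (hSne : S ≠ ∅)
    (hDS : 0 < η - Pmax * ∑ k ∈ S, b k)
    (hαeq : α = (1 / Pmax) *
      ((∑ k ∈ S, h k) /
        ((σ2 + lam * (η - Pmax * ∑ k ∈ S, b k)) / Pmax + ∑ k ∈ S, (h k) ^ 2)) ^ 2)
    (hlamlt : ∀ k, k ∉ S → lam < iota K h b Pmax k α)
    (hroot : (∑ k ∈ Sᶜ, b k * ((h k) ^ 2 / ((h k) ^ 2 - lam * b k) ^ 2)) =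
      (η - Pmax * ∑ k ∈ S, b k) * α) :
    let xbar : Fin K → ℝ :=
      fun k => if k ∈ S then α * Pmax else (h k) ^ 2 / ((h k) ^ 2 - lam * b k) ^ 2
    FeasP2 K b η Pmax xbar α ∧
    ∀ (y : Fin K → ℝ) (β : ℝ), FeasP2 K b η Pmax y β →
      objP2 K h σ2 xbar α ≤ objP2 K h σ2 y β := by
  intro xbar
  have hxb : ∀ k, xbar k =
      if k ∈ S then α * Pmax else (h k) ^ 2 / ((h k) ^ 2 - lam * b k) ^ 2 :=
    fun _ => rfl
  set r := Real.sqrt (α * Pmax) with hrdef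
  have hαP : 0 < α * Pmax := mul_pos hα hP
  have hrpos : 0 < r := Real.sqrt_pos.mpr hαP
  have hr2 : r ^ 2 = α * Pmax := Real.sq_sqrt hαP.le
  -- the strictly positive "dual slope" a
  set a : Fin K → ℝ :=
    fun k => if k ∈ S then h k / r else (h k) ^ 2 - lam * b k with hadef
  -- key inequalities from the definition of S
  have hoff : ∀ k ∉ S, h k / r < (h k) ^ 2 - lam * b k := by
    intro k hk
    have h1 := hlamlt k hk
    unfold iota at h1
    rw [← hrdef] at h1
    have hbk := hb k
    have hhk := hh k
    have heq : (h k) ^ 2 / b k * (1 - 1 / (h k * r)) = ((h k) ^ 2 - h k / r) / b k := by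
      field_simp
    rw [heq, lt_div_iff₀ hbk] at h1
    linarith
  have honS : ∀ k ∈ S, (h k) ^ 2 - lam * b k ≤ h k / r := by
    intro k hk
    have h1 : iota K h b Pmax k α ≤ lam := by
      rw [hSdef] at hk
      exact (Finset.mem_filter.mp hk).2
    unfold iota at h1
    rw [← hrdef] at h1
    have hbk := hb k
    have hhk := hh k
    have heq : (h k) ^ 2 / b k * (1 - 1 / (h k * r)) = ((h k) ^ 2 - h k / r) / b k := by
      field_simp
    rw [heq, div_le_iff₀ hbk] at h1
    linarith
  have hapos : ∀ k, 0 < a k := by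
    intro k
    by_cases hk : k ∈ S
    · simp only [hadef, if_pos hk]
      exact div_pos (hh k) hrpos
    · simp only [hadef, if_neg hk]
      have := hoff k hk
      have h2 : 0 < h k / r := div_pos (hh k) hrpos
      linarith
  -- xbar in terms of a
  have hxbar_eq : ∀ k, xbar k = (h k / a k) ^ 2 := by
    intro k
    by_cases hk : k ∈ S
    · rw [hxb k, if_pos hk]
      simp only [hadef, if_pos hk]
      rw [div_div_eq_mul_div, mul_div_cancel_left₀ _ (ne_of_gt (hh k)), hr2]
    · rw [hxb k, if_neg hk]
      simp only [hadef, if_neg hk]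
      rw [div_pow]
  have hsq : ∀ k, Real.sqrt (xbar k) = h k / a k := by
    intro k
    rw [hxbar_eq k, Real.sqrt_sq (le_of_lt (div_pos (hh k) (hapos k)))]
  -- pointwise minimization
  have hterm_ge : ∀ k t, 0 ≤ t →
      -((h k) ^ 2 / a k) ≤ a k * t - 2 * h k * Real.sqrt t := by
    intro k t ht
    set s := Real.sqrt t with hsdef
    have hs2 : s ^ 2 = t := Real.sq_sqrt ht
    have hak := hapos k
    have hexp : a k * (s - h k / a k) ^ 2 = a k * t - 2 * h k * s + (h k) ^ 2 / a k := by
      rw [← hs2]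
      field_simp
      ring
    have hnn : 0 ≤ a k * (s - h k / a k) ^ 2 :=
      mul_nonneg hak.le (sq_nonneg _)
    linarith
  have hterm_eq : ∀ k, a k * xbar k - 2 * h k * Real.sqrt (xbar k) = -((h k) ^ 2 / a k) := by
    intro k
    rw [hsq k, hxbar_eq k]
    have hak : a k ≠ 0 := (hapos k).ne'
    field_simp
    ring
  -- the multipliers μ
  set μ : Fin K → ℝ := fun k => a k - ((h k) ^ 2 - lam * b k) with hμdef
  have hμ0 : ∀ k ∉ S, μ k = 0 := by
    intro k hk
    simp only [hμdef, hadef, if_neg hk]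
    ring
  have hμnn : ∀ k, 0 ≤ μ k := by
    intro k
    by_cases hk : k ∈ S
    · simp only [hμdef, hadef, if_pos hk]
      linarith [honS k hk]
    · rw [hμ0 k hk]
  -- sums over S
  have hSneo : S.Nonempty := Finset.nonempty_of_ne_empty hSne
  have hHpos : 0 < ∑ k ∈ S, h k := Finset.sum_pos (fun k _ => hh k) hSneo
  have hQpos : 0 < ∑ k ∈ S, (h k) ^ 2 := Finset.sum_pos (fun k _ => pow_pos (hh k) 2) hSneo
  set E : ℝ := (σ2 + lam * (η - Pmax * ∑ k ∈ S, b k)) / Pmax + ∑ k ∈ S, (h k) ^ 2 with hEdef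
  have hEpos : 0 < E := by
    rw [hEdef]
    have h1 : 0 < σ2 + lam * (η - Pmax * ∑ k ∈ S, b k) :=
      add_pos hσ (mul_pos hlam hDS)
    exact add_pos (div_pos h1 hP) hQpos
  have hαP2 : α * Pmax = ((∑ k ∈ S, h k) / E) ^ 2 := by
    rw [hαeq]
    field_simp
  have hrHE : r = (∑ k ∈ S, h k) / E := by
    rw [hrdef, hαP2, Real.sqrt_sq (le_of_lt (div_pos hHpos hEpos))]
  have hHr : (∑ k ∈ S, h k) / r = E := by
    rw [hrHE]
    field_simp
  -- the sum of the multipliers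
  have hμS : ∀ k ∈ S, μ k = h k / r - ((h k) ^ 2 - lam * b k) := by
    intro k hk
    simp only [hμdef, hadef, if_pos hk]
  have hsumμ : ∑ k, μ k =
      (∑ k ∈ S, h k) / r - ∑ k ∈ S, (h k) ^ 2 + lam * ∑ k ∈ S, b k := by
    calc ∑ k, μ k = ∑ k ∈ S, μ k :=
          (Finset.sum_subset (Finset.subset_univ S) (fun k _ hk => hμ0 k hk)).symm
      _ = ∑ k ∈ S, (h k / r - ((h k) ^ 2 - lam * b k)) := Finset.sum_congr rfl hμS
      _ = (∑ k ∈ S, h k) / r - ∑ k ∈ S, (h k) ^ 2 + lam * ∑ k ∈ S, b k := by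
          rw [Finset.sum_sub_distrib, Finset.sum_sub_distrib, Finset.sum_div,
            ← Finset.mul_sum]
          ring
  have hC : σ2 + lam * η - Pmax * ∑ k, μ k = 0 := by
    rw [hsumμ, hHr, hEdef]
    field_simp
    ring
  -- complementary slackness at xbar
  have hsumx : ∑ k, b k * xbar k = η * α := by
    have e1 : ∑ k ∈ S, b k * xbar k = (∑ k ∈ S, b k) * (α * Pmax) := by
      rw [Finset.sum_mul]
      exact Finset.sum_congr rfl (fun k hk => by rw [hxb k, if_pos hk])
    have e2 : ∑ k ∈ Sᶜ, b k * xbar k = (η - Pmax * ∑ k ∈ S, b k) * α := by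
      rw [← hroot]
      exact Finset.sum_congr rfl (fun k hk => by
        rw [hxb k, if_neg (Finset.mem_compl.mp hk)])
    have e3 := Finset.sum_add_sum_compl S (fun k => b k * xbar k)
    rw [e1, e2] at e3
    rw [← e3]
    ring
  -- feasibility bounds
  have hbound : ∀ k, 0 ≤ xbar k ∧ xbar k ≤ Pmax * α := by
    intro k
    rw [hxb k]
    by_cases hk : k ∈ S
    · rw [if_pos hk]
      constructor
      · positivity
      · nlinarith
    · rw [if_neg hk]
      have hc := hoff k hk
      have hhr : 0 < h k / r := div_pos (hh k) hrpos
      have hcp : 0 < (h k) ^ 2 - lam * b k := hhr.trans hc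
      constructor
      · positivity
      · have h2 : (h k / r) ^ 2 ≤ ((h k) ^ 2 - lam * b k) ^ 2 :=
          pow_le_pow_left₀ hhr.le hc.le 2
        have key : (h k) ^ 2 / ((h k) ^ 2 - lam * b k) ^ 2 ≤ r ^ 2 := by
          rw [div_le_iff₀ (by positivity)]
          calc (h k) ^ 2 = (h k / r) ^ 2 * r ^ 2 := by
                rw [div_pow, div_mul_cancel₀ _ (pow_ne_zero 2 hrpos.ne')]
            _ ≤ ((h k) ^ 2 - lam * b k) ^ 2 * r ^ 2 :=
                mul_le_mul_of_nonneg_right h2 (sq_nonneg r)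
            _ = r ^ 2 * ((h k) ^ 2 - lam * b k) ^ 2 := by ring
        rw [hr2] at key
        linarith
  -- the Lagrangian identity
  have hiden : ∀ (y : Fin K → ℝ) (β : ℝ),
      objP2 K h σ2 y β =
        (∑ k, (a k * y k - 2 * h k * Real.sqrt (y k)))
        + lam * ((∑ k, b k * y k) - η * β)
        + (∑ k, μ k * (Pmax * β - y k))
        + β * (σ2 + lam * η - Pmax * ∑ k, μ k) := by
    intro y β
    have hs : ∑ k, ((a k * y k - 2 * h k * Real.sqrt (y k)) + lam * (b k * y k)
          + μ k * (Pmax * β - y k) + (-(β * Pmax)) * μ k)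
        = ∑ k, (h k) ^ 2 * y k - 2 * ∑ k, h k * Real.sqrt (y k) := by
      rw [Finset.mul_sum, ← Finset.sum_sub_distrib]
      exact Finset.sum_congr rfl (fun k _ => by simp only [hμdef]; ring)
    have hs2 : ∑ k, ((a k * y k - 2 * h k * Real.sqrt (y k)) + lam * (b k * y k)
          + μ k * (Pmax * β - y k) + (-(β * Pmax)) * μ k)
        = (∑ k, (a k * y k - 2 * h k * Real.sqrt (y k)))
          + lam * (∑ k, b k * y k)
          + (∑ k, μ k * (Pmax * β - y k))
          + (-(β * Pmax)) * (∑ k, μ k) := by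
      rw [Finset.sum_add_distrib, Finset.sum_add_distrib, Finset.sum_add_distrib,
        ← Finset.mul_sum, ← Finset.mul_sum]
    simp only [objP2]
    rw [← hs, hs2]
    ring
  refine ⟨⟨hsumx.ge, hbound, hα⟩, ?_⟩
  intro y β hfeas
  obtain ⟨hy1, hy2, hy3⟩ := hfeas
  have hL : objP2 K h σ2 xbar α = ∑ k, -((h k) ^ 2 / a k) := by
    rw [hiden xbar α, hsumx, hC]
    have hz : ∑ k, μ k * (Pmax * α - xbar k) = 0 :=
      Finset.sum_eq_zero (fun k _ => by
        by_cases hk : k ∈ S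
        · rw [hxb k, if_pos hk]
          ring
        · rw [hμ0 k hk]
          ring)
    rw [hz, sub_self, mul_zero, mul_zero, add_zero, add_zero, add_zero]
    exact Finset.sum_congr rfl (fun k _ => hterm_eq k)
  have hR : ∑ k, -((h k) ^ 2 / a k) ≤ objP2 K h σ2 y β := by
    rw [hiden y β, hC]
    have t1 : ∑ k, -((h k) ^ 2 / a k) ≤ ∑ k, (a k * y k - 2 * h k * Real.sqrt (y k)) :=
      Finset.sum_le_sum (fun k _ => hterm_ge k (y k) (hy2 k).1)
    have t2 : 0 ≤ lam * ((∑ k, b k * y k) - η * β) :=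
      mul_nonneg hlam.le (by linarith [hy1])
    have t3 : 0 ≤ ∑ k, μ k * (Pmax * β - y k) :=
      Finset.sum_nonneg (fun k _ => mul_nonneg (hμnn k) (by linarith [(hy2 k).2]))
    linarith
  rw [hL]
  exact hR
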